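/- Let α ∈ ℝ, let v_l, v_r be periodic stationary solutions with constant α, and let U be a shock profile connecting v_l to v_r such that U(0) ≠ v_l(0) and U(0) ≠ v_r(0). Then ∫₀¹ ∂_v A(y, v_l(y)) dy ≥ 0 and ∫₀¹ ∂_v A(y, v_r(y)) dy ≤ 0. -/

import Mathlib

open MeasureTheory Filter Set Topology

/-- A periodic stationary solution of the viscous conservation law, with
constant `α`. -/
def PerStat (A : ℝ → ℝ → ℝ) (α : ℝ) (v : ℝ → ℝ) : Prop :=
  ContDiff ℝ 1 v ∧ (∀ x, v (x + 1) = v x) ∧ ∀ x, deriv v x = A x (v x) - α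

/-- A shock profile connecting `vl` to `vr`, with constant `α`. -/
def ShockProfile (A : ℝ → ℝ → ℝ) (α : ℝ) (vl vr U : ℝ → ℝ) : Prop :=
  ContDiff ℝ 1 U ∧ (∀ x, deriv U x = A x (U x) - α) ∧
  Filter.Tendsto (fun x => U x - vl x) Filter.atBot (nhds 0) ∧
  Filter.Tendsto (fun x => U x - vr x) Filter.atTop (nhds 0)

/-!
Suppose `m = ∫₀¹ b < 0`, where `b y = ∂ᵥA(y, v_l y)`. The difference `w = U - v_l` solves
`w' = A(x, v_l + w) - A(x, v_l) = b w + o(w)`, the `o` being uniform in `x` by periodicity.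
So `w w' ≤ c w²` near `-∞`, where `c = b - m` has mean zero, and `w² exp(-2 ∫_X^x c)` is
nonincreasing on `(-∞, X]`. At the points `X - n` the exponential factor is `1`, so this
quantity is bounded by `w (X - n)² → 0`: hence `w` vanishes near `-∞`, and uniqueness for the
ODE gives `U = v_l`, contradicting `U 0 ≠ v_l 0`. The reflection `x ↦ -x`, which replaces `A`
by `-A(-x, ·)` and exchanges the two ends, turns the claim at `v_r` into the one at `v_l`.
-/

open Function

section PartialDeriv

variable {A : ℝ → ℝ → ℝ}

theorem hasDerivAt_fderiv_uncurry (hA : ContDiff ℝ 1 (uncurry A)) (x u : ℝ) :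
    HasDerivAt (A x) (fderiv ℝ (uncurry A) (x, u) (0, 1)) u := by
  have hmk : HasDerivAt (fun u : ℝ => (x, u)) ((0 : ℝ), (1 : ℝ)) u :=
    (hasDerivAt_const u x).prodMk (hasDerivAt_id u)
  exact ((hA.differentiable one_ne_zero (x, u)).hasFDerivAt.comp_hasDerivAt u hmk :)

theorem differentiable_of_contDiff_uncurry (hA : ContDiff ℝ 1 (uncurry A)) (x : ℝ) :
    Differentiable ℝ (A x) :=
  fun u => (hasDerivAt_fderiv_uncurry hA x u).differentiableAt

theorem continuous_deriv_of_contDiff_uncurry (hA : ContDiff ℝ 1 (uncurry A)) :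
    Continuous (uncurry fun x => deriv (A x)) := by
  simp_rw [uncurry_def, fun p : ℝ × ℝ => (hasDerivAt_fderiv_uncurry hA p.1 p.2).deriv]
  exact (hA.continuous_fderiv one_ne_zero).clm_apply continuous_const

end PartialDeriv

theorem exists_pos_forall_abs_sub_le_of_periodic {f : ℝ → ℝ → ℝ}
    (hf : Continuous (uncurry f)) (hper : ∀ x u, f (x + 1) u = f x u) (M : ℝ) {ε : ℝ}
    (hε : 0 < ε) :
    ∃ δ > 0, ∀ x u t, |u| ≤ M → |t - u| ≤ δ → |f x t - f x u| ≤ ε := by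
  have hK : IsCompact (Icc (0 : ℝ) 1 ×ˢ Icc (-(M + 1)) (M + 1)) :=
    isCompact_Icc.prod isCompact_Icc
  obtain ⟨δ₀, hδ₀, hδ⟩ := Metric.uniformContinuousOn_iff.1
    (hK.uniformContinuousOn_of_continuous hf.continuousOn) ε hε
  refine ⟨min (δ₀ / 2) 1, by positivity, fun x u t hu htu => ?_⟩
  have hfract : ∀ v, f x v = f (Int.fract x) v := fun v =>
    ((show Periodic (f · v) 1 from fun y => hper y v).sub_int_mul_eq ⌊x⌋).symm.trans
      (by rw [mul_one]; rfl)
  have hx : Int.fract x ∈ Icc (0 : ℝ) 1 := ⟨Int.fract_nonneg x, (Int.fract_lt_one x).le⟩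
  have htu₁ : |t - u| ≤ 1 := htu.trans (min_le_right _ _)
  have hdist : dist (Int.fract x, t) (Int.fract x, u) < δ₀ := by
    rw [Prod.dist_eq, dist_self, Real.dist_eq]
    exact max_lt hδ₀ (htu.trans_lt ((min_le_left _ _).trans_lt (half_lt_self hδ₀)))
  rw [hfract, hfract, ← Real.dist_eq]
  refine (hδ _ ⟨hx, abs_le.1 ?_⟩ _ ⟨hx, abs_le.1 ?_⟩ hdist).le
  · linarith [abs_sub_abs_le_abs_sub t u]
  · linarith

theorem exists_pos_forall_abs_sub_sub_deriv_mul_le {A : ℝ → ℝ → ℝ}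
    (hA : ContDiff ℝ 1 (uncurry A)) (hper : ∀ x u, A (x + 1) u = A x u) (M : ℝ) {ε : ℝ}
    (hε : 0 < ε) :
    ∃ δ > 0, ∀ x u s, |u| ≤ M → |s| ≤ δ →
      |A x (u + s) - A x u - deriv (A x) u * s| ≤ ε * |s| := by
  have hper' : ∀ x u, deriv (A (x + 1)) u = deriv (A x) u := fun x u => by
    rw [funext (hper x)]
  obtain ⟨δ, hδ, hclose⟩ := exists_pos_forall_abs_sub_le_of_periodic
    (continuous_deriv_of_contDiff_uncurry hA) hper' M hε
  refine ⟨δ, hδ, fun x u s hu hs => ?_⟩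
  have hg : ∀ t, HasDerivAt (fun t => A x t - deriv (A x) u * t)
      (deriv (A x) t - deriv (A x) u) t := fun t =>
    ((differentiable_of_contDiff_uncurry hA x t).hasDerivAt).sub
      ((hasDerivAt_id t).const_mul _ |>.congr_deriv (mul_one _))
  have hmvt := Convex.norm_image_sub_le_of_norm_deriv_le (s := Metric.closedBall u δ)
    (y := u + s) (fun t _ => (hg t).differentiableAt)
    (fun t ht => (hg t).deriv ▸ hclose x u t hu (Metric.mem_closedBall.1 ht))
    (convex_closedBall u δ) (Metric.mem_closedBall_self hδ.le)
    (Metric.mem_closedBall.2 (by rwa [Real.dist_eq, add_sub_cancel_left]))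
  simp only [Real.norm_eq_abs, add_sub_cancel_left] at hmvt
  convert hmvt using 2
  ring

theorem mul_le_add_mul_sq_of_abs_sub_mul_le {s d a ε : ℝ} (h : |d - a * s| ≤ ε * |s|) :
    s * d ≤ (a + ε) * s ^ 2 := by
  have hs : s * (d - a * s) ≤ |s| * (ε * |s|) :=
    (le_abs_self _).trans (abs_mul s _ ▸ mul_le_mul_of_nonneg_left h (abs_nonneg s))
  have hsq : |s| * (ε * |s|) = ε * s ^ 2 := by rw [← sq_abs s]; ring
  linarith

theorem Function.Periodic.intervalIntegral_sub_natCast_eq {c : ℝ → ℝ} (hc : Continuous c)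
    (hcp : Periodic c 1) (X : ℝ) (n : ℕ) :
    ∫ t in X..X - n, c t = -n * ∫ t in (0 : ℝ)..1, c t := by
  have h := hcp.intervalIntegral_add_zsmul_eq (-n) X fun _ _ => hc.intervalIntegrable _ _
  rw [hcp.intervalIntegral_add_eq X 0, zero_add] at h
  simpa [sub_eq_add_neg] using h

theorem Function.Periodic.intervalIntegral_comp_neg {c : ℝ → ℝ} (hcp : Periodic c 1) :
    ∫ t in (0 : ℝ)..1, c (-t) = ∫ t in (0 : ℝ)..1, c t := by
  rw [intervalIntegral.integral_comp_neg, neg_zero]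
  simpa using hcp.intervalIntegral_add_eq (-1) 0

theorem eventually_eq_zero_atBot_of_mul_deriv_le {c w : ℝ → ℝ} (hc : Continuous c)
    (hcp : Periodic c 1) (hmean : ∫ t in (0 : ℝ)..1, c t ≤ 0) (hw : Differentiable ℝ w)
    (hineq : ∀ᶠ x in atBot, w x * deriv w x ≤ c x * w x ^ 2)
    (hlim : Tendsto w atBot (𝓝 0)) : ∀ᶠ x in atBot, w x = 0 := by
  obtain ⟨X, hX⟩ := eventually_atBot.1 hineq
  set C : ℝ → ℝ := fun x => ∫ t in X..x, c t
  set φ : ℝ → ℝ := fun x => w x ^ 2 * Real.exp (-2 * C x)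
  have hφ : ∀ x, HasDerivAt φ
      (2 * Real.exp (-2 * C x) * (w x * deriv w x - c x * w x ^ 2)) x := fun x => by
    have hC : HasDerivAt C (c x) x := (hc.integral_hasStrictDerivAt X x).hasDerivAt
    refine (((hw x).hasDerivAt.fun_pow 2).fun_mul ((hC.const_mul (-2)).exp)).congr_deriv ?_
    push_cast
    ring
  have hanti : AntitoneOn φ (Iic X) := by
    refine antitoneOn_of_hasDerivWithinAt_nonpos (convex_Iic X)
      (HasDerivAt.continuousOn fun x _ => hφ x) (fun x _ => (hφ x).hasDerivWithinAt)
      fun x hx => ?_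
    rw [interior_Iic] at hx
    exact mul_nonpos_of_nonneg_of_nonpos (by positivity) (sub_nonpos.2 (hX x hx.le))
  have hφ_le : ∀ n : ℕ, φ (X - n) ≤ w (X - n) ^ 2 := fun n => by
    have hC : 0 ≤ C (X - n) := by
      simp only [C, hcp.intervalIntegral_sub_natCast_eq hc X n]
      exact mul_nonneg_of_nonpos_of_nonpos (neg_nonpos.2 n.cast_nonneg) hmean
    exact mul_le_of_le_one_right (sq_nonneg _) (Real.exp_le_one_iff.2 (by linarith))
  have hseq : Tendsto (fun n : ℕ => w (X - n) ^ 2) atTop (𝓝 0) := by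
    simpa [← sub_eq_add_neg] using (hlim.comp (tendsto_atBot_add_const_left _ X
      (tendsto_neg_atTop_atBot.comp tendsto_natCast_atTop_atTop))).pow 2
  filter_upwards [eventually_le_atBot X] with x hx
  have hφx : φ x ≤ 0 := by
    refine ge_of_tendsto hseq ?_
    obtain ⟨N, hN⟩ := exists_nat_ge (X - x)
    filter_upwards [eventually_ge_atTop N] with n hn
    have hn' : X - n ≤ x := by linarith [(Nat.cast_le (α := ℝ)).2 hn]
    exact (hanti (mem_Iic.2 (hn'.trans hx)) (mem_Iic.2 hx) hn').trans (hφ_le n)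
  have : w x ^ 2 = 0 :=
    le_antisymm (nonpos_of_mul_nonpos_left hφx (Real.exp_pos _)) (sq_nonneg _)
  exact pow_eq_zero_iff two_ne_zero |>.1 this

/-- The set where two solutions agree is open by local uniqueness, `uncurry F` being locally
Lipschitz, and closed by continuity. -/
theorem ODE_solution_eq_of_contDiff_uncurry {E : Type*} [NormedAddCommGroup E]
    [NormedSpace ℝ E] {F : ℝ → E → E} (hF : ContDiff ℝ 1 (uncurry F)) {f g : ℝ → E}
    (hf : ∀ t, HasDerivAt f (F t (f t)) t) (hg : ∀ t, HasDerivAt g (F t (g t)) t)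
    {t₀ : ℝ} (h : f t₀ = g t₀) : f = g := by
  have hlocal : ∀ t₁, f t₁ = g t₁ → f =ᶠ[𝓝 t₁] g := by
    intro t₁ h₁
    obtain ⟨K, T, hT, hlip⟩ := hF.contDiffAt.exists_lipschitzOnWith (x := (t₁, f t₁))
    have hmem : ∀ k : ℝ → E, (∀ t, HasDerivAt k (F t (k t)) t) → k t₁ = f t₁ →
        ∀ᶠ t in 𝓝 t₁, HasDerivAt k (F t (k t)) t ∧ k t ∈ Prod.mk t ⁻¹' T := by
      intro k hk hk₁
      have hcont : ContinuousAt (fun t => (t, k t)) t₁ :=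
        continuousAt_id.prodMk (hk t₁).continuousAt
      filter_upwards [hcont.preimage_mem_nhds (hk₁ ▸ hT)] with t ht using ⟨hk t, ht⟩
    refine ODE_solution_unique_of_eventually (K := K * 1) (.of_forall fun t => ?_)
      (hmem f hf rfl) (hmem g hg h₁.symm) h₁
    exact hlip.comp (LipschitzWith.prodMk_left t).lipschitzOnWith (mapsTo_preimage _ _)
  have hclopen : IsClopen {t | f t = g t} :=
    ⟨isClosed_eq (continuous_iff_continuousAt.2 fun t => (hf t).continuousAt)
      (continuous_iff_continuousAt.2 fun t => (hg t).continuousAt),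
     isOpen_iff_mem_nhds.2 fun t ht => hlocal t ht⟩
  funext t
  exact eq_univ_iff_forall.1 (hclopen.eq_univ ⟨t₀, h⟩) t

namespace PerStat

variable {A : ℝ → ℝ → ℝ} {α : ℝ} {v : ℝ → ℝ}

theorem hasDerivAt (hv : PerStat A α v) (x : ℝ) : HasDerivAt v (A x (v x) - α) x :=
  hv.2.2 x ▸ (hv.1.differentiable one_ne_zero x).hasDerivAt

theorem periodic_deriv (hper : ∀ x u, A (x + 1) u = A x u) (hv : PerStat A α v) :
    Periodic (fun y => deriv (A y) (v y)) 1 := fun x => by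
  simp only [hv.2.1 x, show A (x + 1) = A x from funext (hper x)]

theorem comp_neg (hv : PerStat A α v) :
    PerStat (fun x u => -A (-x) u) (-α) (fun x => v (-x)) := by
  refine ⟨hv.1.comp contDiff_neg, fun x => ?_, fun x => ?_⟩
  · simpa [neg_add_eq_sub] using (hv.2.1 (-x - 1)).symm
  · rw [deriv_comp_neg, hv.2.2]
    ring

end PerStat

theorem ShockProfile.hasDerivAt {A : ℝ → ℝ → ℝ} {α : ℝ} {vl vr U : ℝ → ℝ}
    (hU : ShockProfile A α vl vr U) (x : ℝ) : HasDerivAt U (A x (U x) - α) x :=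
  hU.2.1 x ▸ (hU.1.differentiable one_ne_zero x).hasDerivAt

section SignCondition

variable {A : ℝ → ℝ → ℝ} {α : ℝ} {v U : ℝ → ℝ}

theorem integral_deriv_nonneg_of_tendsto_atBot (hA : ContDiff ℝ 1 (uncurry A))
    (hper : ∀ x u, A (x + 1) u = A x u) (hv : PerStat A α v)
    (hU : ∀ x, HasDerivAt U (A x (U x) - α) x)
    (hlim : Tendsto (fun x => U x - v x) atBot (𝓝 0)) (h0 : U 0 ≠ v 0) :
    0 ≤ ∫ y in (0 : ℝ)..1, deriv (A y) (v y) := by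
  set b : ℝ → ℝ := fun y => deriv (A y) (v y)
  by_contra! hneg
  have hb : Continuous b :=
    (continuous_deriv_of_contDiff_uncurry hA).comp (continuous_id.prodMk hv.1.continuous)
  obtain ⟨M, hM⟩ := isBounded_iff_forall_norm_le.1
    ((show Periodic v 1 from hv.2.1).isBounded_of_continuous one_ne_zero hv.1.continuous)
  set ε := -∫ y in (0 : ℝ)..1, b y
  obtain ⟨δ, hδ, hlin⟩ := exists_pos_forall_abs_sub_sub_deriv_mul_le hA hper M
    (ε := ε) (by linarith)
  set w : ℝ → ℝ := fun x => U x - v x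
  have hw : ∀ x, HasDerivAt w (A x (v x + w x) - A x (v x)) x := fun x =>
    ((hU x).sub (hv.hasDerivAt x)).congr_deriv (by simp only [w]; ring_nf)
  have hineq : ∀ᶠ x in atBot, w x * deriv w x ≤ (b x + ε) * w x ^ 2 := by
    filter_upwards [hlim.eventually (Metric.closedBall_mem_nhds 0 hδ)] with x hx
    rw [Real.dist_0_eq_abs] at hx
    rw [(hw x).deriv]
    exact mul_le_add_mul_sq_of_abs_sub_mul_le
      (by simpa only [sub_sub] using hlin x (v x) (w x) (hM (v x) (mem_range_self x)) hx)
  have hmean : ∫ y in (0 : ℝ)..1, (b y + ε) ≤ 0 := by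
    rw [intervalIntegral.integral_add (hb.intervalIntegrable _ _) intervalIntegrable_const]
    simp [ε]
  obtain ⟨X, hX⟩ := eventually_atBot.1 <| eventually_eq_zero_atBot_of_mul_deriv_le
    (c := fun y => b y + ε) (hb.add continuous_const)
    (fun x => congrArg (· + ε) (hv.periodic_deriv hper x)) hmean
    (fun x => (hw x).differentiableAt) hineq hlim
  have hUv : U = v := ODE_solution_eq_of_contDiff_uncurry (F := fun x u => A x u - α)
    (hA.sub contDiff_const) hU hv.hasDerivAt (t₀ := X) (sub_eq_zero.1 (hX X le_rfl))
  exact h0 (congrFun hUv 0)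

theorem integral_deriv_nonpos_of_tendsto_atTop (hA : ContDiff ℝ 1 (uncurry A))
    (hper : ∀ x u, A (x + 1) u = A x u) (hv : PerStat A α v)
    (hU : ∀ x, HasDerivAt U (A x (U x) - α) x)
    (hlim : Tendsto (fun x => U x - v x) atTop (𝓝 0)) (h0 : U 0 ≠ v 0) :
    ∫ y in (0 : ℝ)..1, deriv (A y) (v y) ≤ 0 := by
  have hA' : ContDiff ℝ 1 (uncurry fun x u => -A (-x) u) :=
    (hA.comp (contDiff_fst.neg.prodMk contDiff_snd)).neg
  have hper' : ∀ x u, -A (-(x + 1)) u = -A (-x) u := fun x u => by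
    rw [← hper (-(x + 1)) u, neg_add, neg_add_cancel_right]
  have hU' : ∀ x, HasDerivAt (fun x => U (-x)) (-A (-x) (U (-x)) - -α) x := fun x =>
    ((hU (-x)).comp x (hasDerivAt_neg x)).congr_deriv (by ring)
  have hreflected := integral_deriv_nonneg_of_tendsto_atBot hA' hper' hv.comp_neg hU'
    (hlim.comp tendsto_neg_atBot_atTop) (by simpa using h0)
  simp only [deriv.fun_neg, intervalIntegral.integral_neg,
    (hv.periodic_deriv hper).intervalIntegral_comp_neg (c := fun y => deriv (A y) (v y))]
    at hreflected
  linarith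

end SignCondition

/-- signs of the mean of `∂_v A` along the asymptotic states of a
nontrivial shock profile. -/
theorem shock_profile_sign_condition
    (A : ℝ → ℝ → ℝ)
    (hA : ContDiff ℝ 1 (Function.uncurry A))
    (hper : ∀ y v, A (y + 1) v = A y v)
    (α : ℝ) (vl vr : ℝ → ℝ)
    (hvl : PerStat A α vl) (hvr : PerStat A α vr)
    (U : ℝ → ℝ) (hU : ShockProfile A α vl vr U)
    (h0l : U 0 ≠ vl 0) (h0r : U 0 ≠ vr 0) :
    (0 ≤ ∫ y in (0:ℝ)..1, deriv (fun w => A y w) (vl y)) ∧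
    (∫ y in (0:ℝ)..1, deriv (fun w => A y w) (vr y)) ≤ 0 :=
  ⟨integral_deriv_nonneg_of_tendsto_atBot hA hper hvl hU.hasDerivAt hU.2.2.1 h0l,
    integral_deriv_nonpos_of_tendsto_atTop hA hper hvr hU.hasDerivAt hU.2.2.2 h0r⟩
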